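/- (Proposition 1.) For i = 1,…,n, let X_i ∈ ℝ^{m_i×d} satisfy X_iᵀX_i = I_d, let y_i ∈ ℝ^{m_i}, set θ̄_i = X_iᵀ y_i, and let S = Σ_{i=1}^n θ̄_i θ̄_iᵀ. Let k ≤ d and let W* ∈ ℝ^{d×k} be a matrix whose columns are orthonormal eigenvectors of S corresponding to its k largest eigenvalues, and set v_i* = (W*)ᵀ θ̄_i. Then (W*, (v_i*)) globally minimizes Σ_{i=1}^n ‖X_i W v_i − y_i‖² over all W ∈ ℝ^{d×k} and v_1,…,v_n ∈ ℝ^k; that is, the optimal linear hypernetwork is given by PCA on {θ̄_1,…,θ̄_n}. -/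

import Mathlib

/-!
Since `X_iᵀ X_i = 1`, the loss of client `i` at `θ = W v_i` is `‖θ̄_i - θ‖²` plus a constant, and
`θ` ranges over the column space `K` of `W`, of dimension at most `k`. For an orthonormal basis
`c` of `K`, that distance is at least `‖θ̄_i‖² - ∑_l ⟪c_l, θ̄_i⟫²`. Summed over the clients,
`∑_i ∑_l ⟪c_l, θ̄_i⟫² = ∑_l c_lᵀ S c_l = ∑_j λ_j γ_j` with weights `γ_j = ∑_l ⟪c_l, u_j⟫²`
in `[0, 1]` (Bessel) and of total `dim K ≤ k` (Parseval), and such a weighted sum of the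
decreasing, nonnegative eigenvalues is at most `λ_1 + ⋯ + λ_k` (Ky Fan). The PCA reconstruction
`W* v_i* = ∑_{p < k} ⟪u_p, θ̄_i⟫ u_p` attains this bound.
-/

open Matrix Finset
open scoped RealInnerProductSpace
open WithLp (toLp)

theorem sum_mul_le_sum_of_threshold {ι : Type*} [Fintype ι] [DecidableEq ι] {A : Finset ι}
    {lam c : ι → ℝ} {t : ℝ} (ht : 0 ≤ t) (hA : ∀ j ∈ A, t ≤ lam j) (hAc : ∀ j ∉ A, lam j ≤ t)
    (hc0 : ∀ j, 0 ≤ c j) (hc1 : ∀ j, c j ≤ 1) (hc : ∑ j, c j ≤ #A) :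
    ∑ j, lam j * c j ≤ ∑ j ∈ A, lam j := by
  -- termwise, `(lam j - t) * (c j - [j ∈ A]) ≤ 0`
  have key : ∀ j, lam j * c j - (if j ∈ A then lam j else 0)
      ≤ t * (c j - if j ∈ A then 1 else 0) := fun j => by
    split_ifs with h
    · nlinarith [hA j h, hc1 j]
    · nlinarith [hAc j h, hc0 j]
  have hsum := Finset.sum_le_sum fun j (_ : j ∈ univ) => key j
  simp only [Finset.sum_sub_distrib, ← Finset.mul_sum, Finset.sum_ite_mem, Finset.univ_inter,
    Finset.sum_const, nsmul_eq_mul, mul_one] at hsum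
  nlinarith

theorem Antitone.sum_mul_le_sum_castLE {d k : ℕ} (hk : k ≤ d) {lam c : Fin d → ℝ}
    (hlam : Antitone lam) (hlam0 : ∀ j, 0 ≤ lam j) (hc0 : ∀ j, 0 ≤ c j) (hc1 : ∀ j, c j ≤ 1)
    (hc : ∑ j, c j ≤ k) :
    ∑ j, lam j * c j ≤ ∑ p : Fin k, lam (Fin.castLE hk p) := by
  have hmem : ∀ j : Fin d, j ∈ univ.map (Fin.castLEEmb hk) ↔ (j : ℕ) < k := fun j => by
    simp only [Finset.mem_map, Finset.mem_univ, true_and, Fin.castLEEmb_apply]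
    exact ⟨fun ⟨p, hp⟩ => hp ▸ p.isLt, fun h => ⟨⟨j, h⟩, rfl⟩⟩
  rw [show ∑ p : Fin k, lam (Fin.castLE hk p) = _ from
    (Finset.sum_map univ (Fin.castLEEmb hk) lam).symm]
  refine sum_mul_le_sum_of_threshold (t := if h : k < d then lam ⟨k, h⟩ else 0)
    ?_ (fun j hj => ?_) (fun j hj => ?_) hc0 hc1 (by simpa using hc)
  · split_ifs <;> simp [hlam0]
  · rw [hmem] at hj
    split_ifs with h
    · exact hlam (Fin.mk_le_mk.mpr hj.le)
    · exact hlam0 j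
  · rw [hmem, not_lt] at hj
    have h : k < d := hj.trans_lt j.isLt
    rw [dif_pos h]
    exact hlam (Fin.mk_le_mk.mpr hj)

section InnerProductSpace

variable {E : Type*} [NormedAddCommGroup E] [InnerProductSpace ℝ E]

theorem Orthonormal.norm_sub_sum_inner_smul_sq {κ : Type*} [Fintype κ] {e : κ → E}
    (he : Orthonormal ℝ e) (x : E) :
    ‖x - ∑ l, ⟪e l, x⟫ • e l‖ ^ 2 = ‖x‖ ^ 2 - ∑ l, ⟪e l, x⟫ ^ 2 := by
  have hxy : ⟪x, ∑ l, ⟪e l, x⟫ • e l⟫ = ∑ l, ⟪e l, x⟫ ^ 2 := by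
    simp [inner_sum, inner_smul_right, real_inner_comm x, sq]
  have hyy : ‖∑ l, ⟪e l, x⟫ • e l‖ ^ 2 = ∑ l, ⟪e l, x⟫ ^ 2 := by
    rw [← real_inner_self_eq_norm_sq, he.inner_sum]
    simp [sq]
  rw [norm_sub_sq_real, hxy, hyy]
  ring

theorem OrthonormalBasis.norm_sq_sub_sum_inner_sq_le_norm_sub_sq {κ : Type*} [Fintype κ]
    {K : Submodule ℝ E} [K.HasOrthogonalProjection] (c : OrthonormalBasis κ ℝ K) (x : E) {z : E}
    (hz : z ∈ K) :
    ‖x‖ ^ 2 - ∑ l, ⟪(c l : E), x⟫ ^ 2 ≤ ‖x - z‖ ^ 2 := by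
  have hc : Orthonormal ℝ fun l => (c l : E) := c.orthonormal.comp_linearIsometry K.subtypeₗᵢ
  have hproj : K.starProjection x = ∑ l, ⟪(c l : E), x⟫ • (c l : E) := by
    simp [Submodule.starProjection_apply, c.orthogonalProjectionOnto_apply_eq_sum]
  have hmin : ‖x - K.starProjection x‖ ≤ ‖x - z‖ := by
    rw [Submodule.starProjection_minimal]
    exact ciInf_le ⟨0, Set.forall_mem_range.mpr fun _ => norm_nonneg _⟩ (⟨z, hz⟩ : K)
  rw [← hc.norm_sub_sum_inner_smul_sq, ← hproj]
  gcongr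

section Spectral

variable {ι κ : Type*} [Fintype ι] [Fintype κ] {θ : ι → E} {b : OrthonormalBasis κ ℝ E}
  {lam : κ → ℝ}

theorem sum_inner_sq_eq_sum_mul_inner_sq
    (heig : ∀ j, ∑ i, ⟪θ i, b j⟫ • θ i = lam j • b j) (w : E) :
    ∑ i, ⟪θ i, w⟫ ^ 2 = ∑ j, lam j * ⟪b j, w⟫ ^ 2 := by
  have hθ : ∀ i, ⟪θ i, w⟫ = ∑ j, ⟪θ i, b j⟫ * ⟪b j, w⟫ := fun i =>
    (b.sum_inner_mul_inner _ _).symm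
  have hlam : ∀ j, ∑ i, ⟪θ i, b j⟫ * ⟪θ i, w⟫ = lam j * ⟪b j, w⟫ := fun j => by
    simpa [sum_inner, inner_smul_left] using congrArg (⟪·, w⟫) (heig j)
  calc ∑ i, ⟪θ i, w⟫ ^ 2 = ∑ i, ∑ j, ⟪θ i, b j⟫ * ⟪b j, w⟫ * ⟪θ i, w⟫ := by
        simp_rw [sq, ← Finset.sum_mul, ← hθ]
    _ = ∑ j, (∑ i, ⟪θ i, b j⟫ * ⟪θ i, w⟫) * ⟪b j, w⟫ := by
        rw [Finset.sum_comm]; simp_rw [Finset.sum_mul]; congr! 2; ring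
    _ = ∑ j, lam j * ⟪b j, w⟫ ^ 2 := by simp_rw [hlam]; congr! 1; ring

theorem eigenvalue_eq_sum_inner_sq
    (heig : ∀ j, ∑ i, ⟪θ i, b j⟫ • θ i = lam j • b j) (j : κ) :
    lam j = ∑ i, ⟪θ i, b j⟫ ^ 2 := by
  simpa [sum_inner, inner_smul_left, sq] using (congrArg (⟪·, b j⟫) (heig j)).symm

end Spectral

section PCA

variable {ι : Type*} [Fintype ι] {θ : ι → E} {d : ℕ} {b : OrthonormalBasis (Fin d) ℝ E}
  {lam : Fin d → ℝ}

theorem sum_sum_inner_sq_le_sum_castLE (heig : ∀ j, ∑ i, ⟪θ i, b j⟫ • θ i = lam j • b j)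
    (hlam : Antitone lam) {k : ℕ} (hk : k ≤ d) {κ : Type*} [Fintype κ] {c : κ → E}
    (hc : Orthonormal ℝ c) (hκ : Fintype.card κ ≤ k) :
    ∑ i, ∑ l, ⟪c l, θ i⟫ ^ 2 ≤ ∑ p : Fin k, lam (Fin.castLE hk p) := by
  have hweights : ∑ i, ∑ l, ⟪c l, θ i⟫ ^ 2 = ∑ j, lam j * ∑ l, ⟪c l, b j⟫ ^ 2 := by
    rw [Finset.sum_comm]
    simp_rw [fun i l => real_inner_comm (θ i) (c l), sum_inner_sq_eq_sum_mul_inner_sq heig,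
      Finset.mul_sum, fun j l => real_inner_comm (b j) (c l)]
    exact Finset.sum_comm
  have htotal : ∑ j, ∑ l, ⟪c l, b j⟫ ^ 2 = Fintype.card κ := by
    rw [Finset.sum_comm]
    simp_rw [fun j l => real_inner_comm (b j) (c l), b.sum_sq_inner_right, hc.1, one_pow]
    simp
  rw [hweights]
  refine hlam.sum_mul_le_sum_castLE hk
    (fun j => (eigenvalue_eq_sum_inner_sq heig j).symm ▸ Finset.sum_nonneg fun _ _ => sq_nonneg _)
    (fun j => Finset.sum_nonneg fun _ _ => sq_nonneg _) (fun j => ?_)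
    (htotal ▸ by exact_mod_cast hκ)
  simpa [b.orthonormal.1 j] using hc.sum_inner_products_le (b j) (s := univ)

theorem sum_norm_sub_pca_sq_le [FiniteDimensional ℝ E]
    (heig : ∀ j, ∑ i, ⟪θ i, b j⟫ • θ i = lam j • b j)
    (hlam : Antitone lam) {k : ℕ} (hk : k ≤ d) {K : Submodule ℝ E}
    (hK : Module.finrank ℝ K ≤ k) {z : ι → E} (hz : ∀ i, z i ∈ K) :
    ∑ i, ‖θ i - ∑ p : Fin k, ⟪b (Fin.castLE hk p), θ i⟫ • b (Fin.castLE hk p)‖ ^ 2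
      ≤ ∑ i, ‖θ i - z i‖ ^ 2 := by
  have htop : Orthonormal ℝ fun p : Fin k => b (Fin.castLE hk p) :=
    b.orthonormal.comp _ (Fin.castLE_injective hk)
  set c := stdOrthonormalBasis ℝ K
  have hc : Orthonormal ℝ fun l => (c l : E) := c.orthonormal.comp_linearIsometry K.subtypeₗᵢ
  calc ∑ i, ‖θ i - ∑ p : Fin k, ⟪b (Fin.castLE hk p), θ i⟫ • b (Fin.castLE hk p)‖ ^ 2
      = ∑ i, ‖θ i‖ ^ 2 - ∑ p : Fin k, lam (Fin.castLE hk p) := by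
        simp_rw [htop.norm_sub_sum_inner_smul_sq, Finset.sum_sub_distrib,
          eigenvalue_eq_sum_inner_sq heig, real_inner_comm (θ _)]
        rw [Finset.sum_comm]
    _ ≤ ∑ i, ‖θ i‖ ^ 2 - ∑ i, ∑ l, ⟪(c l : E), θ i⟫ ^ 2 := by
        gcongr
        exact sum_sum_inner_sq_le_sum_castLE heig hlam hk hc (by simpa using hK)
    _ ≤ ∑ i, ‖θ i - z i‖ ^ 2 := by
        rw [← Finset.sum_sub_distrib]
        exact Finset.sum_le_sum fun i _ => c.norm_sq_sub_sum_inner_sq_le_norm_sub_sq _ (hz i)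

end PCA

end InnerProductSpace

theorem sum_sq_mulVec_sub_eq {m d : Type*} [Fintype m] [Fintype d] [DecidableEq d]
    {X : Matrix m d ℝ} (hX : Xᵀ * X = 1) (y : m → ℝ) (z : d → ℝ) :
    ∑ j, (X *ᵥ z - y) j ^ 2
      = ‖toLp 2 (Xᵀ *ᵥ y) - toLp 2 z‖ ^ 2 + (∑ j, y j ^ 2 - ‖toLp 2 (Xᵀ *ᵥ y)‖ ^ 2) := by
  have hm : ∀ w : m → ℝ, ∑ j, w j ^ 2 = w ⬝ᵥ w := fun w => by simp [dotProduct, sq]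
  have hd : ∀ w : d → ℝ, ‖toLp 2 w‖ ^ 2 = w ⬝ᵥ w := fun w => by
    rw [EuclideanSpace.real_norm_sq_eq]
    simp [dotProduct, sq]
  have hzz : X *ᵥ z ⬝ᵥ X *ᵥ z = z ⬝ᵥ z := by
    rw [dotProduct_mulVec, ← mulVec_transpose, mulVec_mulVec, hX, one_mulVec]
  have hzy : X *ᵥ z ⬝ᵥ y = z ⬝ᵥ Xᵀ *ᵥ y := by
    rw [dotProduct_comm, dotProduct_mulVec, ← mulVec_transpose, dotProduct_comm]
  rw [← WithLp.toLp_sub, hd, hd, hm, hm]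
  simp only [sub_dotProduct, dotProduct_sub, hzz, hzy, dotProduct_comm y, dotProduct_comm _ z]
  ring

theorem exists_orthonormalBasis_toLp {ι : Type*} [Fintype ι] [DecidableEq ι] {u : ι → ι → ℝ}
    (hu : ∀ i j, u i ⬝ᵥ u j = if i = j then 1 else 0) :
    ∃ b : OrthonormalBasis ι ℝ (EuclideanSpace ℝ ι), ∀ j, b j = toLp 2 (u j) := by
  have hon : Orthonormal ℝ fun j => toLp 2 (u j) := by
    rw [orthonormal_iff_ite]
    intro i j
    simp [EuclideanSpace.inner_toLp_toLp, dotProduct_comm (u j), hu]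
  have hspan := hon.linearIndependent.span_eq_top_of_card_eq_finrank' (by simp)
  exact ⟨OrthonormalBasis.mk hon hspan.ge, fun j => by simp⟩

/-- Proposition 1: For clients `i = 1,…,n` with data matrices
`X_i ∈ ℝ^{m_i×d}` satisfying `X_iᵀX_i = I_d`, labels `y_i ∈ ℝ^{m_i}`, ERM solutions
`θ̄_i = X_iᵀ y_i`, and second-moment matrix `S = Σ_i θ̄_i θ̄_iᵀ`: if `k ≤ d`,
`W* ∈ ℝ^{d×k}` has as columns orthonormal eigenvectors of `S` corresponding to its `k`
largest eigenvalues (listed decreasingly by `lam` with orthonormal eigenbasis `u`), and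
`v_i* = (W*)ᵀ θ̄_i`, then `(W*, (v_i*))` globally minimizes
`Σ_i ‖X_i W v_i − y_i‖²` over all `W ∈ ℝ^{d×k}` and `v_1,…,v_n ∈ ℝ^k`;
i.e. the optimal linear hypernetwork is given by PCA on `{θ̄_1,…,θ̄_n}`. -/
theorem stmt8 {n d k : ℕ} (hk : k ≤ d) (m : Fin n → ℕ)
    (X : ∀ i, Matrix (Fin (m i)) (Fin d) ℝ)
    (hX : ∀ i, (X i)ᵀ * X i = 1)
    (y : ∀ i, Fin (m i) → ℝ)
    (θbar : Fin n → Fin d → ℝ) (hθbar : ∀ i, θbar i = (X i)ᵀ.mulVec (y i))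
    (S : Matrix (Fin d) (Fin d) ℝ)
    (hS : S = ∑ i, Matrix.vecMulVec (θbar i) (θbar i))
    (lam : Fin d → ℝ) (hlam : Antitone lam)
    (u : Fin d → Fin d → ℝ)
    (hortho : ∀ i j, u i ⬝ᵥ u j = if i = j then (1 : ℝ) else 0)
    (heig : ∀ i, S.mulVec (u i) = lam i • u i)
    (Wstar : Matrix (Fin d) (Fin k) ℝ)
    (hWstar : Wstar = Matrix.of fun r c => u (Fin.castLE hk c) r)
    (vstar : Fin n → Fin k → ℝ)
    (hvstar : ∀ i, vstar i = Wstarᵀ.mulVec (θbar i)) :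
    ∀ (W : Matrix (Fin d) (Fin k) ℝ) (v : Fin n → Fin k → ℝ),
      ∑ i, ∑ j, ((X i).mulVec (Wstar.mulVec (vstar i)) - y i) j ^ 2
        ≤ ∑ i, ∑ j, ((X i).mulVec (W.mulVec (v i)) - y i) j ^ 2 := by
  intro W v
  obtain ⟨b, hb⟩ := exists_orthonormalBasis_toLp hortho
  have hinner : ∀ x w : Fin d → ℝ, ⟪toLp 2 x, toLp 2 w⟫ = x ⬝ᵥ w := fun x w => by
    simp [EuclideanSpace.inner_toLp_toLp, dotProduct_comm]
  have heig' : ∀ j, ∑ i, ⟪toLp 2 (θbar i), b j⟫ • toLp 2 (θbar i) = lam j • b j := fun j => by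
    have hSu := heig j
    simp only [hS, sum_mulVec, vecMulVec_mulVec, op_smul_eq_smul] at hSu
    simp only [hb, hinner, ← WithLp.toLp_smul, ← WithLp.toLp_sum, hSu]
  have hstar : ∀ i, toLp 2 (Wstar *ᵥ vstar i)
      = ∑ p : Fin k, ⟪b (Fin.castLE hk p), toLp 2 (θbar i)⟫ • b (Fin.castLE hk p) := fun i => by
    simp only [hvstar, hWstar, hb, hinner, ← WithLp.toLp_smul, ← WithLp.toLp_sum]
    congr 1
    ext r
    simp [mulVec, dotProduct, Finset.sum_apply, mul_comm]
  have hK : Module.finrank ℝ (LinearMap.range (toLpLin 2 2 W)) ≤ k :=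
    (LinearMap.finrank_range_le _).trans (by simp)
  have hz : ∀ i, toLp 2 (W *ᵥ v i) ∈ LinearMap.range (toLpLin 2 2 W) := fun i =>
    ⟨toLp 2 (v i), rfl⟩
  simp_rw [sum_sq_mulVec_sub_eq (hX _), ← hθbar, Finset.sum_add_distrib, hstar]
  gcongr ?_ + _
  exact sum_norm_sub_pca_sq_le heig' hlam hk hK hz
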